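/- arXiv:1708.06522 — 3 statements merged into one kernel-verified Lean document; each statement's English description precedes it below -/
import Mathlib

section
/- Let ψ and φ be unit vectors in H_A ⊗ H_B where ψ has Schmidt rank at most N' and φ has Schmidt coefficients λ_0 ≥ λ_1 ≥ ⋯ with at least N nonzero coefficients, N > N'. Then ‖ψ − φ‖² ≥ ∑_{i ≥ N'} λ_i². -/
/-!
Let `W` be the span of the rows of `ψ`, a subspace of `ℂⁿ` of dimension at most `N'`, and let `χ`
be `φ` with each row projected orthogonally onto `W`. The rows of `ψ` lie in `W`, so
`⟪ψ, φ⟫ = ⟪ψ, χ⟫` and hence `‖ψ - φ‖² = 2 - 2 Re ⟪ψ, χ⟫ ≥ 2 - 2‖χ‖ ≥ 1 - ‖χ‖²`.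
Orthonormality of the `uᵢ` gives `‖χ‖² = ∑ λᵢ² cᵢ` with `cᵢ = ‖P_W vᵢ‖² ∈ [0, 1]`, and Bessel's
inequality gives `∑ cᵢ ≤ dim W ≤ N'`. For nonincreasing `λ` such a sum is at most
`∑_{i < N'} λᵢ²`, and `∑ λᵢ² = ‖φ‖² = 1`.
-/

open Finset

section Threshold

variable {ι : Type*} [DecidableEq ι]

theorem sum_mul_le_sum_of_threshold (s S : Finset ι) (hS : S ⊆ s) (w c : ι → ℝ) (t : ℝ)
    (ht : 0 ≤ t) (hc0 : ∀ i ∈ s, 0 ≤ c i) (hc1 : ∀ i ∈ s, c i ≤ 1) (hc : ∑ i ∈ s, c i ≤ #S)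
    (hwS : ∀ i ∈ S, t ≤ w i) (hw : ∀ i ∈ s \ S, w i ≤ t) :
    ∑ i ∈ s, w i * c i ≤ ∑ i ∈ S, w i := by
  have hin : ∑ i ∈ S, (w i - t) * c i ≤ ∑ i ∈ S, (w i - t) :=
    sum_le_sum fun i hi => mul_le_of_le_one_right (sub_nonneg.2 (hwS i hi)) (hc1 i (hS hi))
  have hout : ∑ i ∈ s \ S, (w i - t) * c i ≤ 0 :=
    sum_nonpos fun i hi =>
      mul_nonpos_of_nonpos_of_nonneg (sub_nonpos.2 (hw i hi)) (hc0 i (sdiff_subset hi))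
  calc ∑ i ∈ s, w i * c i = ∑ i ∈ s, (w i - t) * c i + t * ∑ i ∈ s, c i := by
        rw [mul_sum, ← sum_add_distrib]; congr 1 with i; ring
    _ = ∑ i ∈ S, (w i - t) * c i + ∑ i ∈ s \ S, (w i - t) * c i + t * ∑ i ∈ s, c i := by
        rw [← sum_sdiff hS, add_comm (∑ i ∈ s \ S, _)]
    _ ≤ ∑ i ∈ S, (w i - t) + 0 + t * #S := by gcongr
    _ = ∑ i ∈ S, w i := by simp [sum_sub_distrib]; ring

end Threshold

theorem Fin.sum_mul_le_sum_lt_of_antitone {N k : ℕ} (hk : k < N) {w : Fin N → ℝ} (hw0 : 0 ≤ w)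
    (hw : Antitone w) {c : Fin N → ℝ} (hc0 : ∀ i, 0 ≤ c i) (hc1 : ∀ i, c i ≤ 1)
    (hc : ∑ i, c i ≤ k) :
    ∑ i, w i * c i ≤ ∑ i ∈ univ.filter (fun i : Fin N => (i : ℕ) < k), w i := by
  have hcard : #(univ.filter (fun i : Fin N => (i : ℕ) < k)) = k := by
    convert Fin.card_Iio (⟨k, hk⟩ : Fin N) using 2
    ext i; simp [Fin.lt_def]
  refine sum_mul_le_sum_of_threshold _ _ (filter_subset _ _) w c (w ⟨k, hk⟩) (hw0 _)
    (fun i _ => hc0 i) (fun i _ => hc1 i) (by rwa [hcard]) (fun i hi => hw ?_) (fun i hi => hw ?_)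
  · simp only [mem_filter] at hi; exact Fin.le_def.2 hi.2.le
  · simp only [mem_sdiff, mem_filter] at hi; exact Fin.le_def.2 (by simp at hi; omega)

variable {𝕜 : Type*} [RCLike 𝕜]

theorem Orthonormal.sum_norm_sq_starProjection_le_finrank {E : Type*} [NormedAddCommGroup E]
    [InnerProductSpace 𝕜 E] {ι : Type*} [Fintype ι] {v : ι → E} (hv : Orthonormal 𝕜 v)
    (W : Submodule 𝕜 E) [FiniteDimensional 𝕜 W] :
    ∑ i, ‖W.starProjection (v i)‖ ^ 2 ≤ Module.finrank 𝕜 W := by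
  let b := stdOrthonormalBasis 𝕜 W
  have parseval (x : E) : ‖W.starProjection x‖ ^ 2 = ∑ k, ‖inner 𝕜 (b k : E) x‖ ^ 2 := by
    rw [W.starProjection_apply, Submodule.norm_coe, ← b.sum_sq_norm_inner_right]
    simp_rw [W.inner_orthogonalProjectionOnto_eq_of_mem_left]
  calc ∑ i, ‖W.starProjection (v i)‖ ^ 2 = ∑ k, ∑ i, ‖inner 𝕜 (v i) (b k : E)‖ ^ 2 := by
        simp_rw [parseval, norm_inner_symm]; exact sum_comm
    _ ≤ ∑ k, ‖(b k : E)‖ ^ 2 := by gcongr with k; exact hv.sum_inner_products_le _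
    _ = Module.finrank 𝕜 W := by simp [Submodule.norm_coe, b.orthonormal.1]

theorem Orthonormal.sum_norm_sq_sum_smul {ι κ E : Type*} [Fintype ι] [Fintype κ]
    [NormedAddCommGroup E] [InnerProductSpace 𝕜 E] {u : κ → EuclideanSpace 𝕜 ι}
    (hu : Orthonormal 𝕜 u) (w : κ → E) :
    ∑ a, ‖∑ i, u i a • w i‖ ^ 2 = ∑ i, ‖w i‖ ^ 2 := by
  classical
  have key : ∑ a, inner 𝕜 (∑ i, u i a • w i) (∑ j, u j a • w j) = ∑ i, inner 𝕜 (w i) (w i) := by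
    simp_rw [sum_inner, inner_sum, inner_smul_left, inner_smul_right]
    rw [sum_comm]
    refine sum_congr rfl fun i _ => ?_
    have hui := orthonormal_iff_ite.1 hu i
    simp_rw [PiLp.inner_apply, RCLike.inner_apply] at hui
    calc _ = ∑ j, (if i = j then 1 else 0) * inner 𝕜 (w i) (w j) := by
          rw [sum_comm]
          exact sum_congr rfl fun j _ => by rw [← hui j, sum_mul]; congr with x; ring
      _ = _ := by simp
  apply RCLike.ofReal_injective (K := 𝕜)
  push_cast
  simp_rw [← inner_self_eq_norm_sq_to_K]
  exact key

theorem one_sub_norm_sq_le_norm_sub_sq {E : Type*} [NormedAddCommGroup E] [InnerProductSpace 𝕜 E]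
    {x y z : E} (hx : ‖x‖ = 1) (hy : ‖y‖ = 1) (h : inner 𝕜 x y = inner 𝕜 x z) :
    1 - ‖z‖ ^ 2 ≤ ‖x - y‖ ^ 2 := by
  have hre : RCLike.re (inner 𝕜 x y) ≤ ‖z‖ := by
    simpa [h, hx] using (RCLike.re_le_norm (inner 𝕜 x z)).trans (norm_inner_le_norm x z)
  rw [norm_sub_sq (𝕜 := 𝕜), hx, hy]
  nlinarith [sq_nonneg (1 - ‖z‖)]

namespace Bipartite

variable {ι κ : Type*}

def row (x : EuclideanSpace 𝕜 (ι × κ)) (a : ι) : EuclideanSpace 𝕜 κ :=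
  WithLp.toLp 2 fun b => x (a, b)

theorem inner_eq_sum_inner_row [Fintype ι] [Fintype κ] (x y : EuclideanSpace 𝕜 (ι × κ)) :
    inner 𝕜 x y = ∑ a, inner 𝕜 (row x a) (row y a) := by
  simp [PiLp.inner_apply, Fintype.sum_prod_type, row]

theorem norm_sq_eq_sum_norm_sq_row [Fintype ι] [Fintype κ] (x : EuclideanSpace 𝕜 (ι × κ)) :
    ‖x‖ ^ 2 = ∑ a, ‖row x a‖ ^ 2 := by
  simp [EuclideanSpace.norm_sq_eq, Fintype.sum_prod_type, row]

theorem finrank_span_range_row [Finite ι] [Fintype κ] (x : EuclideanSpace 𝕜 (ι × κ)) :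
    Module.finrank 𝕜 (Submodule.span 𝕜 (Set.range (row x))) =
      (Matrix.of fun a b => x (a, b)).rank := by
  rw [Matrix.rank_eq_finrank_span_row,
    ← LinearEquiv.finrank_map_eq (WithLp.linearEquiv 2 𝕜 (κ → 𝕜)).symm, Submodule.map_span,
    ← Set.range_comp]
  rfl

noncomputable def rowProj [Fintype κ] (W : Submodule 𝕜 (EuclideanSpace 𝕜 κ))
    [W.HasOrthogonalProjection] (x : EuclideanSpace 𝕜 (ι × κ)) : EuclideanSpace 𝕜 (ι × κ) :=
  WithLp.toLp 2 fun p => W.starProjection (row x p.1) p.2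

@[simp]
theorem row_rowProj [Fintype κ] (W : Submodule 𝕜 (EuclideanSpace 𝕜 κ))
    [W.HasOrthogonalProjection] (x : EuclideanSpace 𝕜 (ι × κ)) (a : ι) :
    row (rowProj W x) a = W.starProjection (row x a) :=
  rfl

theorem inner_rowProj_of_row_mem [Fintype ι] [Fintype κ] {W : Submodule 𝕜 (EuclideanSpace 𝕜 κ)}
    [W.HasOrthogonalProjection] {x : EuclideanSpace 𝕜 (ι × κ)} (hx : ∀ a, row x a ∈ W)
    (y : EuclideanSpace 𝕜 (ι × κ)) : inner 𝕜 x (rowProj W y) = inner 𝕜 x y := by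
  simp_rw [inner_eq_sum_inner_row, row_rowProj, ← W.inner_starProjection_left_eq_right,
    W.starProjection_eq_self_iff.2 (hx _)]

end Bipartite

/-- If `ψ` has Schmidt rank at most `N'` and `φ = ∑_{i<N} λ_i u_i⊗v_i` with `λ` positive and
nonincreasing (at least `N > N'` nonzero Schmidt coefficients), then
`‖ψ − φ‖² ≥ ∑_{i ≥ N'} λ_i²`. Bipartite vectors are modelled as elements of
`ℂ^m ⊗ ℂ^n ≅ ℂ^{m×n}`, and the Schmidt rank is the rank of the corresponding matrix. -/
theorem stmt4 {m n : ℕ} (N N' : ℕ) (hNN' : N' < N)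
    (ψ φ : EuclideanSpace ℂ (Fin m × Fin n))
    (hψ : ‖ψ‖ = 1) (hφ : ‖φ‖ = 1)
    (hrank : (Matrix.of fun a b => ψ (a, b)).rank ≤ N')
    (lam : Fin N → ℝ) (hpos : ∀ i, 0 < lam i)
    (hmono : ∀ i j : Fin N, i ≤ j → lam j ≤ lam i)
    (u : Fin N → EuclideanSpace ℂ (Fin m)) (hu : Orthonormal ℂ u)
    (v : Fin N → EuclideanSpace ℂ (Fin n)) (hv : Orthonormal ℂ v)
    (hφdef : ∀ p : Fin m × Fin n, φ p = ∑ i, (lam i : ℂ) * u i p.1 * v i p.2) :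
    ∑ i ∈ Finset.univ.filter (fun i : Fin N => N' ≤ (i : ℕ)), lam i ^ 2 ≤ ‖ψ - φ‖ ^ 2 := by
  set W := Submodule.span ℂ (Set.range (Bipartite.row ψ))
  have hW : Module.finrank ℂ W ≤ N' := (Bipartite.finrank_span_range_row ψ).trans_le hrank
  have hrow (a : Fin m) : Bipartite.row φ a = ∑ i, u i a • (lam i : ℂ) • v i := by
    ext b; simp only [Bipartite.row, hφdef]; simp [mul_assoc, mul_left_comm]
  have hsum : ∑ i, lam i ^ 2 = 1 := by
    have := Bipartite.norm_sq_eq_sum_norm_sq_row φ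
    simp_rw [hrow, hu.sum_norm_sq_sum_smul, norm_smul, hv.1, hφ] at this
    simpa using this.symm
  have hχ : ‖Bipartite.rowProj W φ‖ ^ 2 = ∑ i, lam i ^ 2 * ‖W.starProjection (v i)‖ ^ 2 := by
    simp_rw [Bipartite.norm_sq_eq_sum_norm_sq_row, Bipartite.row_rowProj, hrow, map_sum, map_smul,
      hu.sum_norm_sq_sum_smul, norm_smul, mul_pow]
    simp
  have hχle : ‖Bipartite.rowProj W φ‖ ^ 2 ≤
      ∑ i ∈ Finset.univ.filter (fun i : Fin N => (i : ℕ) < N'), lam i ^ 2 :=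
    hχ ▸ Fin.sum_mul_le_sum_lt_of_antitone hNN' (fun i => sq_nonneg (lam i))
      (fun i j hij => pow_le_pow_left₀ (hpos j).le (hmono i j hij) 2) (fun i => sq_nonneg _)
      (fun i => pow_le_one₀ (norm_nonneg _) ((W.norm_starProjection_apply_le _).trans (hv.1 i).le))
      ((hv.sum_norm_sq_starProjection_le_finrank W).trans (by exact_mod_cast hW))
  have hψW (a : Fin m) : Bipartite.row ψ a ∈ W := Submodule.subset_span (Set.mem_range_self a)
  have hclose := one_sub_norm_sq_le_norm_sub_sq hψ hφ
    (Bipartite.inner_rowProj_of_row_mem hψW φ).symm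
  have hsplit := Finset.sum_filter_add_sum_filter_not Finset.univ
    (fun i : Fin N => (i : ℕ) < N') (fun i => lam i ^ 2)
  simp only [not_lt] at hsplit
  linarith
end

section
/- Let φ = ∑_{i=0}^{N-1} c_i |i⟩⊗|i⟩ ⊗ χ where c_i = C_N (i+1)^{-8} (nonincreasing) and χ is any unit vector in an auxiliary bipartite space, taken with its own Schmidt decomposition. If ψ is any unit vector of Schmidt rank at most N' < N (with respect to the bipartition combining the first factors with the first auxiliary factors), then ‖ψ − φ‖ = Ω(N'^{-8}), with constant independent of N, χ. -/
/-!
View vectors of `ℂ^{(N × m₁) × (N × m₂)}` as matrices across the bipartition and let `W` be the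
column space of `ψ`, so `dim W = rank ψ ≤ N'`. Since every column of `ψ` lies in `W`,
`‖ψ - φ‖²` is at least the sum of the squared distances of the columns of `φ` to `W`. The column
`(j, b)` of `φ` is `c_j (e_j ⊗ χ_{·b})`, so with `q_j = ∑_b ‖P_W (e_j ⊗ χ_{·b})‖²` this gives
`‖ψ - φ‖² ≥ ∑_j c_j² (1 - q_j)`. Here `0 ≤ q_j ≤ 1`, and `∑_j q_j ≤ dim W ≤ N'` because by
Cauchy–Schwarz the vectors `e_j ⊗ χ_{·b}` form a Bessel family with bound `‖χ‖² = 1`. Among the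
`N' + 1` largest coefficients `c_0, …, c_{N'}` at least a total weight `1` is therefore lost, so
`‖ψ - φ‖ ≥ c_{N'} = C_N (N' + 1)^{-8}`, and `C_N ≥ 1/2` because `∑ n^{-16} ≤ ∑ n^{-2} ≤ 2`.
-/

noncomputable def CT (N : ℕ) : ℝ :=
  (Real.sqrt (∑ n ∈ Finset.range N, ((n : ℝ) + 1) ^ (-16 : ℤ)))⁻¹

open scoped InnerProductSpace
open Finset Submodule Module

variable {𝕜 : Type*} [RCLike 𝕜]

section Slices

variable {ι κ μ : Type*} [Fintype ι] [Fintype κ] [Fintype μ]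

def rowSlice (v : EuclideanSpace 𝕜 (ι × κ)) (i : ι) : EuclideanSpace 𝕜 κ :=
  WithLp.toLp 2 fun k => v (i, k)

def colSlice (v : EuclideanSpace 𝕜 (ι × κ)) (k : κ) : EuclideanSpace 𝕜 ι :=
  WithLp.toLp 2 fun i => v (i, k)

def embedRow [DecidableEq ι] (i : ι) (u : EuclideanSpace 𝕜 κ) : EuclideanSpace 𝕜 (ι × κ) :=
  WithLp.toLp 2 fun p => if p.1 = i then u p.2 else 0

omit [Fintype ι] [Fintype κ] in
theorem colSlice_sub (v w : EuclideanSpace 𝕜 (ι × κ)) (k : κ) :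
    colSlice (v - w) k = colSlice v k - colSlice w k := rfl

theorem norm_sq_eq_sum_norm_sq_rowSlice (v : EuclideanSpace 𝕜 (ι × κ)) :
    ‖v‖ ^ 2 = ∑ i, ‖rowSlice v i‖ ^ 2 := by
  simp [PiLp.norm_sq_eq_of_L2, Fintype.sum_prod_type, rowSlice]

theorem norm_sq_eq_sum_norm_sq_colSlice (v : EuclideanSpace 𝕜 (ι × κ)) :
    ‖v‖ ^ 2 = ∑ k, ‖colSlice v k‖ ^ 2 := by
  simp [PiLp.norm_sq_eq_of_L2, Fintype.sum_prod_type_right, colSlice]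

theorem inner_embedRow [DecidableEq ι] (w : EuclideanSpace 𝕜 (ι × κ)) (i : ι)
    (u : EuclideanSpace 𝕜 κ) : ⟪w, embedRow i u⟫_𝕜 = ⟪rowSlice w i, u⟫_𝕜 := by
  simp [PiLp.inner_apply, Fintype.sum_prod_type, embedRow, rowSlice, apply_ite]

theorem norm_embedRow [DecidableEq ι] (i : ι) (u : EuclideanSpace 𝕜 κ) :
    ‖embedRow i u‖ = ‖u‖ := by
  rw [← sq_eq_sq₀ (norm_nonneg _) (norm_nonneg _), norm_sq_eq_sum_norm_sq_rowSlice,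
    Finset.sum_eq_single i]
  · congr 2
    ext k
    simp [rowSlice, embedRow]
  · intro j _ hj
    simp [rowSlice, embedRow, hj, PiLp.norm_sq_eq_of_L2]
  · simp

theorem sum_norm_inner_embedRow_colSlice_sq_le [DecidableEq ι] (w : EuclideanSpace 𝕜 (ι × κ))
    (χ : EuclideanSpace 𝕜 (κ × μ)) :
    ∑ p : ι × μ, ‖⟪w, embedRow p.1 (colSlice χ p.2)⟫_𝕜‖ ^ 2 ≤ ‖w‖ ^ 2 * ‖χ‖ ^ 2 := by
  calc ∑ p : ι × μ, ‖⟪w, embedRow p.1 (colSlice χ p.2)⟫_𝕜‖ ^ 2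
      ≤ ∑ p : ι × μ, ‖rowSlice w p.1‖ ^ 2 * ‖colSlice χ p.2‖ ^ 2 := by
        gcongr with p
        rw [inner_embedRow, ← mul_pow]
        gcongr
        exact norm_inner_le_norm _ _
    _ = ‖w‖ ^ 2 * ‖χ‖ ^ 2 := by
        rw [norm_sq_eq_sum_norm_sq_rowSlice, norm_sq_eq_sum_norm_sq_colSlice,
          Finset.sum_mul_sum, Fintype.sum_prod_type]

omit [Fintype ι] in
theorem finrank_span_colSlice (v : EuclideanSpace 𝕜 (ι × κ)) :
    finrank 𝕜 (span 𝕜 (Set.range (colSlice v))) = (Matrix.of fun a b => v (a, b)).rank := by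
  rw [Matrix.rank_eq_finrank_span_cols, ← LinearEquiv.finrank_map_eq (WithLp.linearEquiv 2 𝕜 _),
    Submodule.map_span, ← Set.range_comp]
  rfl

end Slices

section Projection

variable {E : Type*} [NormedAddCommGroup E] [InnerProductSpace 𝕜 E]

theorem norm_sq_sub_norm_sq_starProjection_le (W : Submodule 𝕜 E) [W.HasOrthogonalProjection]
    (x : E) {u : E} (hu : u ∈ W) : ‖x‖ ^ 2 - ‖W.starProjection x‖ ^ 2 ≤ ‖x - u‖ ^ 2 := by
  have hmin : ‖x - W.starProjection x‖ ≤ ‖x - u‖ := by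
    rw [starProjection_minimal]
    exact ciInf_le ⟨0, Set.forall_mem_range.mpr fun _ => norm_nonneg _⟩ (⟨u, hu⟩ : W)
  rw [norm_sq_eq_add_norm_sq_starProjection x W, starProjection_orthogonal_val]
  have := pow_le_pow_left₀ (norm_nonneg _) hmin 2
  linarith

theorem norm_sq_starProjection_eq_sum {ι : Type*} [Fintype ι] (W : Submodule 𝕜 E)
    [W.HasOrthogonalProjection] (b : OrthonormalBasis ι 𝕜 W) (x : E) :
    ‖W.starProjection x‖ ^ 2 = ∑ k, ‖⟪(b k : E), x⟫_𝕜‖ ^ 2 := by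
  rw [starProjection_apply, norm_coe, ← b.sum_sq_norm_inner_right]
  simp_rw [inner_orthogonalProjectionOnto_eq_of_mem_left]

theorem sum_norm_sq_starProjection_le_finrank {κ : Type*} [Fintype κ] (W : Submodule 𝕜 E)
    [FiniteDimensional 𝕜 W] [W.HasOrthogonalProjection] (y : κ → E)
    (hy : ∀ w, ∑ k, ‖⟪w, y k⟫_𝕜‖ ^ 2 ≤ ‖w‖ ^ 2) :
    ∑ k, ‖W.starProjection (y k)‖ ^ 2 ≤ finrank 𝕜 W := by
  let b := stdOrthonormalBasis 𝕜 W
  calc ∑ k, ‖W.starProjection (y k)‖ ^ 2 = ∑ i, ∑ k, ‖⟪(b i : E), y k⟫_𝕜‖ ^ 2 := by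
        simp_rw [norm_sq_starProjection_eq_sum W b]
        exact Finset.sum_comm
    _ ≤ ∑ i : Fin (finrank 𝕜 W), (1 : ℝ) := by
        gcongr with i
        exact (hy (b i)).trans_eq (by rw [norm_coe, b.orthonormal.1 i, one_pow])
    _ = finrank 𝕜 W := by simp

end Projection

theorem le_sum_mul_one_sub {ι : Type*} [Fintype ι] {a q : ι → ℝ} {T : Finset ι} {m : ℝ} {n : ℕ}
    (hT : T.card = n + 1) (hm : 0 ≤ m) (hmT : ∀ j ∈ T, m ≤ a j) (ha : ∀ j, 0 ≤ a j)
    (hq0 : ∀ j, 0 ≤ q j) (hq1 : ∀ j, q j ≤ 1) (hq : ∑ j, q j ≤ n) :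
    m ≤ ∑ j, a j * (1 - q j) := by
  have hqT : ∑ j ∈ T, q j ≤ n :=
    (Finset.sum_le_sum_of_subset_of_nonneg T.subset_univ fun j _ _ => hq0 j).trans hq
  calc m ≤ m * (T.card - ∑ j ∈ T, q j) := by
        rw [hT]; push_cast; nlinarith
    _ = ∑ j ∈ T, m * (1 - q j) := by
        rw [← Finset.mul_sum, Finset.sum_sub_distrib, Finset.sum_const, nsmul_one]
    _ ≤ ∑ j ∈ T, a j * (1 - q j) := by
        gcongr with j hj
        · linarith [hq1 j]
        · exact hmT j hj
    _ ≤ ∑ j, a j * (1 - q j) :=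
        Finset.sum_le_sum_of_subset_of_nonneg T.subset_univ fun j _ _ =>
          mul_nonneg (ha j) (by linarith [hq1 j])

theorem sq_le_norm_sub_sq_of_finrank_le {ι κ μ : Type*} [Fintype ι] [DecidableEq ι] [Fintype κ]
    [Fintype μ] {c : ι → ℝ} {χ : EuclideanSpace 𝕜 (κ × μ)} (hχ : ‖χ‖ = 1)
    {φ ψ : EuclideanSpace 𝕜 ((ι × κ) × (ι × μ))}
    (hφ : ∀ j b, colSlice φ (j, b) = (c j : 𝕜) • embedRow j (colSlice χ b))
    {n : ℕ} (hψ : finrank 𝕜 (span 𝕜 (Set.range (colSlice ψ))) ≤ n)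
    {T : Finset ι} (hT : T.card = n + 1) {m : ℝ} (hm : 0 ≤ m) (hmT : ∀ j ∈ T, m ≤ c j) :
    m ^ 2 ≤ ‖ψ - φ‖ ^ 2 := by
  set W := span 𝕜 (Set.range (colSlice ψ))
  set y : ι → μ → EuclideanSpace 𝕜 (ι × κ) := fun j b => embedRow j (colSlice χ b)
  set q : ι → ℝ := fun j => ∑ b, ‖W.starProjection (y j b)‖ ^ 2 with hq_def
  have hy : ∀ j, ∑ b, ‖y j b‖ ^ 2 = 1 := fun j => by
    simp only [y, norm_embedRow, ← norm_sq_eq_sum_norm_sq_colSlice, hχ, one_pow]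
  have hq0 : ∀ j, 0 ≤ q j := fun j => by positivity
  have hq1 : ∀ j, q j ≤ 1 := fun j =>
    (Finset.sum_le_sum fun b _ => by gcongr; exact W.norm_starProjection_apply_le _).trans_eq
      (hy j)
  have hq : ∑ j, q j ≤ n := by
    have hB := sum_norm_sq_starProjection_le_finrank W (fun p : ι × μ => y p.1 p.2) fun w => by
      simpa [hχ] using sum_norm_inner_embedRow_colSlice_sq_le w χ
    calc ∑ j, q j = ∑ p : ι × μ, ‖W.starProjection (y p.1 p.2)‖ ^ 2 :=
          (Fintype.sum_prod_type' _).symm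
      _ ≤ finrank 𝕜 W := hB
      _ ≤ n := by exact_mod_cast hψ
  have hdist : ∑ j, c j ^ 2 * (1 - q j) ≤ ‖ψ - φ‖ ^ 2 := by
    calc ∑ j, c j ^ 2 * (1 - q j)
        = ∑ p : ι × μ, (‖colSlice φ p‖ ^ 2 - ‖W.starProjection (colSlice φ p)‖ ^ 2) := by
          rw [Fintype.sum_prod_type]
          refine Finset.sum_congr rfl fun j _ => ?_
          rw [← hy j, hq_def, ← Finset.sum_sub_distrib, Finset.mul_sum]
          refine Finset.sum_congr rfl fun b _ => ?_
          rw [hφ, map_smul, norm_smul, norm_smul, mul_pow, mul_pow, RCLike.norm_ofReal, sq_abs,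
            mul_sub]
      _ ≤ ∑ p : ι × μ, ‖colSlice φ p - colSlice ψ p‖ ^ 2 := by
          gcongr with p
          exact norm_sq_sub_norm_sq_starProjection_le W _ (subset_span ⟨p, rfl⟩)
      _ = ‖ψ - φ‖ ^ 2 := by
          simp_rw [norm_sq_eq_sum_norm_sq_colSlice (ψ - φ), colSlice_sub, norm_sub_rev]
  have hcount := le_sum_mul_one_sub (a := fun j => c j ^ 2) (q := q) hT (sq_nonneg m)
    (fun j hj => pow_le_pow_left₀ hm (hmT j hj) 2) (fun j => sq_nonneg (c j)) hq0 hq1 hq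
  exact hcount.trans hdist

theorem sum_range_zpow_neg_sixteen_le_two (N : ℕ) :
    ∑ n ∈ range N, ((n : ℝ) + 1) ^ (-16 : ℤ) ≤ 2 :=
  calc ∑ n ∈ range N, ((n : ℝ) + 1) ^ (-16 : ℤ)
      ≤ ∑ n ∈ range N, ((((1 + n : ℕ) : ℝ)) ^ 2)⁻¹ := by
        gcongr with n
        rw [← zpow_natCast, ← zpow_neg, Nat.cast_add, Nat.cast_one, add_comm]
        exact zpow_le_zpow_right₀ (by simp) (by norm_num)
    _ = ∑ i ∈ Ioo 0 (N + 1), ((i : ℝ) ^ 2)⁻¹ := by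
        rw [← Finset.Ico_add_one_left_eq_Ioo, Finset.sum_Ico_eq_sum_range, zero_add,
          Nat.add_sub_cancel]
    _ ≤ 2 := by simpa using sum_Ioo_inv_sq_le (α := ℝ) 0 (N + 1)

theorem CT_nonneg (N : ℕ) : 0 ≤ CT N := inv_nonneg.mpr (Real.sqrt_nonneg _)

theorem half_le_CT {N : ℕ} (hN : 0 < N) : 1 / 2 ≤ CT N := by
  have hpos : 0 < ∑ n ∈ range N, ((n : ℝ) + 1) ^ (-16 : ℤ) :=
    sum_pos (fun n _ => by positivity) (nonempty_range_iff.mpr hN.ne')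
  have hle : Real.sqrt (∑ n ∈ range N, ((n : ℝ) + 1) ^ (-16 : ℤ)) ≤ 2 :=
    Real.sqrt_le_iff.mpr ⟨by norm_num, by linarith [sum_range_zpow_neg_sixteen_le_two N]⟩
  rw [one_div]
  exact inv_anti₀ (Real.sqrt_pos.mpr hpos) hle

theorem zpow_neg_eight_le_add_one {x : ℝ} (hx : 1 ≤ x) :
    1 / 256 * x ^ (-8 : ℤ) ≤ (x + 1) ^ (-8 : ℤ) := by
  calc 1 / 256 * x ^ (-8 : ℤ) = (2 * x) ^ (-8 : ℤ) := by
        rw [mul_zpow]; norm_num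
    _ ≤ (x + 1) ^ (-8 : ℤ) := by
        simp only [zpow_neg, zpow_ofNat]
        gcongr
        linarith

/-- If `φ = (∑_{i<N} c_i |i⟩⊗|i⟩) ⊗ χ` with `c_i = C_N (i+1)^{-8}` and `χ` a unit vector in an
auxiliary bipartite space, and `ψ` is a unit vector of Schmidt rank at most `N' < N` (with
respect to the bipartition combining the first factors with the first auxiliary factors), then
`‖ψ − φ‖ = Ω(N'^{-8})`, with constant independent of `N`, `χ`, the auxiliary spaces and `ψ`. -/
theorem stmt5 : ∃ β : ℝ, 0 < β ∧
    ∀ (N N' : ℕ), 0 < N' → N' < N →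
    ∀ (m₁ m₂ : Type) [Fintype m₁] [Fintype m₂]
      (χ : EuclideanSpace ℂ (m₁ × m₂))
      (ψ φ : EuclideanSpace ℂ ((Fin N × m₁) × (Fin N × m₂))),
      ‖χ‖ = 1 → ‖ψ‖ = 1 →
      (Matrix.of fun a b => ψ (a, b)).rank ≤ N' →
      (∀ p : (Fin N × m₁) × (Fin N × m₂),
        φ p = (if p.1.1 = p.2.1
                then ((CT N * (((p.1.1 : ℕ) : ℝ) + 1) ^ (-8 : ℤ) : ℝ) : ℂ) else 0)
              * χ (p.1.2, p.2.2)) →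
      β * (N' : ℝ) ^ (-8 : ℤ) ≤ ‖ψ - φ‖ := by
  refine ⟨1 / 512, by norm_num, fun N N' hN' hNN m₁ m₂ _ _ χ ψ φ hχ _ hrank hφ => ?_⟩
  set c : Fin N → ℝ := fun j => CT N * (((j : ℕ) : ℝ) + 1) ^ (-8 : ℤ)
  have hcol : ∀ j b, colSlice φ (j, b) = (c j : ℂ) • embedRow j (colSlice χ b) := by
    intro j b
    ext ⟨i, a⟩
    by_cases h : i = j <;> simp [h, colSlice, embedRow, hφ, c]
  have hm : 0 ≤ CT N * ((N' : ℝ) + 1) ^ (-8 : ℤ) := mul_nonneg (CT_nonneg N) (by positivity)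
  have hmc : ∀ j ∈ Iic (⟨N', hNN⟩ : Fin N), CT N * ((N' : ℝ) + 1) ^ (-8 : ℤ) ≤ c j := by
    intro j hj
    refine mul_le_mul_of_nonneg_left ?_ (CT_nonneg N)
    simp only [zpow_neg, zpow_ofNat]
    gcongr
    exact_mod_cast mem_Iic.mp hj
  have hsq := sq_le_norm_sub_sq_of_finrank_le hχ hcol ((finrank_span_colSlice ψ).trans_le hrank)
    (Fin.card_Iic _) hm hmc
  calc 1 / 512 * (N' : ℝ) ^ (-8 : ℤ) = 1 / 2 * (1 / 256 * (N' : ℝ) ^ (-8 : ℤ)) := by ring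
    _ ≤ CT N * ((N' : ℝ) + 1) ^ (-8 : ℤ) :=
        mul_le_mul (half_le_CT (hN'.trans hNN))
          (zpow_neg_eight_le_add_one (Nat.one_le_cast.mpr hN')) (by positivity) (CT_nonneg N)
    _ ≤ ‖ψ - φ‖ := (pow_le_pow_iff_left₀ hm (norm_nonneg _) two_ne_zero).mp hsq
end

section
/- Let A₀, A₁, B₀, B₁ be ±1-valued random variables on a common probability space (i.e., a local hidden variable model), and let 0 ≤ α ≤ 2. Then 𝔼[α A₀ + A₀B₀ + A₀B₁ + A₁B₀ − A₁B₁] ≤ 2 + α. -/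
open MeasureTheory

/-- The tilted CHSH inequality for local (classical) correlations: for `±1`-valued random
variables `A₀, A₁, B₀, B₁` on a common probability space and `0 ≤ α ≤ 2`,
`𝔼[α A₀ + A₀B₀ + A₀B₁ + A₁B₀ − A₁B₁] ≤ 2 + α`. -/
theorem stmt7 {Ω : Type*} [MeasurableSpace Ω] (μ : Measure Ω) [IsProbabilityMeasure μ]
    (A₀ A₁ B₀ B₁ : Ω → ℝ)
    (hA₀ : Measurable A₀) (hA₁ : Measurable A₁)
    (hB₀ : Measurable B₀) (hB₁ : Measurable B₁)
    (hvA₀ : ∀ ω, A₀ ω = 1 ∨ A₀ ω = -1) (hvA₁ : ∀ ω, A₁ ω = 1 ∨ A₁ ω = -1)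
    (hvB₀ : ∀ ω, B₀ ω = 1 ∨ B₀ ω = -1) (hvB₁ : ∀ ω, B₁ ω = 1 ∨ B₁ ω = -1)
    (α : ℝ) (hα0 : 0 ≤ α) (hα2 : α ≤ 2) :
    ∫ ω, (α * A₀ ω + A₀ ω * B₀ ω + A₀ ω * B₁ ω + A₁ ω * B₀ ω - A₁ ω * B₁ ω) ∂μ
      ≤ 2 + α := by
  have hpt : ∀ ω, α * A₀ ω + A₀ ω * B₀ ω + A₀ ω * B₁ ω + A₁ ω * B₀ ω - A₁ ω * B₁ ω
      ≤ 2 + α := by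
    intro ω
    rcases hvA₀ ω with h0 | h0 <;> rcases hvA₁ ω with h1 | h1 <;>
      rcases hvB₀ ω with h2 | h2 <;> rcases hvB₁ ω with h3 | h3 <;>
      simp [h0, h1, h2, h3] <;> linarith
  have hmeas : Measurable fun ω =>
      α * A₀ ω + A₀ ω * B₀ ω + A₀ ω * B₁ ω + A₁ ω * B₀ ω - A₁ ω * B₁ ω := by
    fun_prop
  have hint : Integrable (fun ω =>
      α * A₀ ω + A₀ ω * B₀ ω + A₀ ω * B₁ ω + A₁ ω * B₀ ω - A₁ ω * B₁ ω) μ := by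
    apply Integrable.mono' (integrable_const (α + 4)) hmeas.aestronglyMeasurable
    filter_upwards with ω
    rcases hvA₀ ω with h0 | h0 <;> rcases hvA₁ ω with h1 | h1 <;>
      rcases hvB₀ ω with h2 | h2 <;> rcases hvB₁ ω with h3 | h3 <;>
      simp [h0, h1, h2, h3, abs_le] <;> constructor <;> linarith
  calc ∫ ω, (α * A₀ ω + A₀ ω * B₀ ω + A₀ ω * B₁ ω + A₁ ω * B₀ ω - A₁ ω * B₁ ω) ∂μ
      ≤ ∫ _, (2 + α) ∂μ := integral_mono hint (integrable_const _) hpt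
    _ = 2 + α := by simp
end
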